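/- Let A: S^n → R^m be a linear map. Then null(A) ∩ S^n_+ = {0} if and only if range(A*) ∩ S^n_{++} ≠ ∅, where A* is the adjoint of A and S^n_{++} denotes the positive definite matrices. -/

import Mathlib

/-!
If `∑ yᵢ Sᵢ` is positive definite, its trace pairing with a nonzero positive semidefinite matrix
is positive, so no such matrix lies in the null space. Conversely, if the null space meets the
positive semidefinite cone only in `0`, it misses the compact convex spectraplex
`{X ⪰ 0 | tr X = 1}`. A functional strictly separating the two is bounded below on the null space,
hence vanishes there, hence is `X ↦ tr ((∑ cᵢ Sᵢ) X)` for some `c`; its negativity on the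
spectraplex, tested on `v vᵀ / ‖v‖²`, says that `-∑ cᵢ Sᵢ` is positive definite.
-/

open Matrix

theorem LinearMap.eq_zero_of_forall_lt_apply {E : Type*} [AddCommGroup E] [Module ℝ E]
    {p : Submodule ℝ E} {f : E →ₗ[ℝ] ℝ} {c : ℝ} (h : ∀ x ∈ p, c < f x) {x : E} (hx : x ∈ p) :
    f x = 0 := by
  by_contra hfx
  have := h _ (p.smul_mem (c / f x) hx)
  rw [map_smul, smul_eq_mul, div_mul_cancel₀ c hfx] at this
  exact this.false

namespace Matrix

variable {n ι : Type*} [Fintype n] [Fintype ι]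

open scoped ComplexOrder MatrixOrder in
theorem PosDef.trace_mul_eq_zero_iff {𝕜 : Type*} [RCLike 𝕜] {A X : Matrix n n 𝕜}
    (hA : A.PosDef) (hX : X.PosSemidef) : (A * X).trace = 0 ↔ X = 0 := by
  classical
  obtain ⟨B, rfl⟩ := CStarAlgebra.nonneg_iff_eq_star_mul_self.mp hX.nonneg
  obtain ⟨C, hC, rfl⟩ := CStarAlgebra.isStrictlyPositive_iff_eq_star_mul_self.mp
    hA.isStrictlyPositive
  -- `tr (C⋆C B⋆B)` is the squared Frobenius norm of `C B⋆`, and `C` is invertible.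
  have hcycle : (star C * C * (star B * B)).trace = ((C * Bᴴ)ᴴ * (C * Bᴴ)).trace := by
    rw [← mul_assoc, trace_mul_comm, star_eq_conjTranspose, star_eq_conjTranspose,
      conjTranspose_mul, conjTranspose_conjTranspose]
    simp only [mul_assoc]
  rw [hcycle, trace_conjTranspose_mul_self_eq_zero_iff, hC.mul_right_eq_zero,
    conjTranspose_eq_zero]
  refine ⟨by rintro rfl; simp, fun h => trace_conjTranspose_mul_self_eq_zero_iff.mp ?_⟩
  rw [← star_eq_conjTranspose, h, trace_zero]

theorem PosSemidef.two_mul_abs_apply_le {X : Matrix n n ℝ} (hX : X.PosSemidef) (i j : n) :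
    2 * |X i j| ≤ X i i + X j j := by
  classical
  have hsymm : X j i = X i j := by simpa using hX.1.apply i j
  have hquad (s : ℝ) : 0 ≤ X i i + 2 * s * X i j + s ^ 2 * X j j := by
    have := hX.dotProduct_mulVec_nonneg (Pi.single i 1 + s • Pi.single j 1)
    simp only [star_trivial, mulVec_add, mulVec_smul, mulVec_single, dotProduct_add,
      add_dotProduct, MulOpposite.op_one, one_smul, single_dotProduct, col_apply, one_mul,
      smul_dotProduct, dotProduct_smul, smul_eq_mul, hsymm] at this
    linarith
  rcases abs_choice (X i j) with h | h <;> rw [h] <;> linarith [hquad 1, hquad (-1)]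

theorem PosSemidef.abs_apply_le_trace {X : Matrix n n ℝ} (hX : X.PosSemidef) (i j : n) :
    |X i j| ≤ X.trace := by
  have hdiag (k : n) : X k k ≤ X.trace :=
    Finset.single_le_sum (f := X.diag) (fun _ _ => hX.diag_nonneg) (Finset.mem_univ k)
  linarith [hX.two_mul_abs_apply_le i j, hdiag i, hdiag j]

theorem isClosed_setOf_posSemidef : IsClosed {X : Matrix n n ℝ | X.PosSemidef} := by
  have hform (x : n → ℝ) : Continuous fun X : Matrix n n ℝ => x ⬝ᵥ X *ᵥ x :=
    continuous_const.dotProduct (continuous_id.matrix_mulVec continuous_const)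
  simp_rw [posSemidef_iff_dotProduct_mulVec, star_trivial, Set.ofPred_and, Set.ofPred_forall]
  exact (isClosed_eq continuous_id.matrix_conjTranspose continuous_id).inter
    (isClosed_iInter fun x => isClosed_le continuous_const (hform x))

def spectraplex (n : Type*) [Fintype n] : Set (Matrix n n ℝ) :=
  {X | X.PosSemidef ∧ X.trace = 1}

theorem convex_spectraplex : Convex ℝ (spectraplex n) := by
  rintro X ⟨hX, hXtr⟩ Y ⟨hY, hYtr⟩ a b ha hb hab
  exact ⟨(hX.smul ha).add (hY.smul hb), by simp [hXtr, hYtr, hab]⟩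

theorem isCompact_spectraplex : IsCompact (spectraplex n) := by
  have hbox : IsCompact (Set.univ.pi fun _ : n => Set.univ.pi fun _ : n => Set.Icc (-1 : ℝ) 1) :=
    isCompact_univ_pi fun _ => isCompact_univ_pi fun _ => isCompact_Icc
  refine hbox.of_isClosed_subset ?_ fun X ⟨hX, hXtr⟩ i _ j _ => ?_
  · exact isClosed_setOf_posSemidef.inter (isClosed_eq continuous_id.matrix_trace continuous_const)
  · exact abs_le.mp (hXtr ▸ hX.abs_apply_le_trace i j)

theorem posDef_of_forall_spectraplex_trace_mul_pos {A : Matrix n n ℝ} (hA : A.IsHermitian)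
    (h : ∀ X ∈ spectraplex n, 0 < (A * X).trace) : A.PosDef := by
  refine PosDef.of_dotProduct_mulVec_pos hA fun v hv => ?_
  have hvv : 0 < v ⬝ᵥ v := by simpa using dotProduct_self_star_pos_iff.mpr hv
  have hmem : (v ⬝ᵥ v)⁻¹ • vecMulVec v v ∈ spectraplex n :=
    ⟨(posSemidef_vecMulVec_self_star v).smul (inv_nonneg.mpr hvv.le), by
      rw [trace_smul, trace_vecMulVec, smul_eq_mul, inv_mul_cancel₀ hvv.ne']⟩
  have := h _ hmem
  rw [mul_smul_comm, trace_smul, mul_vecMulVec, trace_vecMulVec, smul_eq_mul,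
    dotProduct_comm (A *ᵥ v)] at this
  simpa using pos_of_mul_pos_right this (inv_nonneg.mpr hvv.le)

theorem exists_forall_spectraplex_trace_sum_smul_mul_pos (S : ι → Matrix n n ℝ)
    (h : ∀ X : Matrix n n ℝ, X.PosSemidef → (∀ i, (S i * X).trace = 0) → X = 0) :
    ∃ y : ι → ℝ, ∀ X ∈ spectraplex n, 0 < ((∑ i, y i • S i) * X).trace := by
  let L (i : ι) : Matrix n n ℝ →ₗ[ℝ] ℝ := traceLinearMap n ℝ ℝ ∘ₗ LinearMap.mulLeft ℝ (S i)
  let N : Submodule ℝ (Matrix n n ℝ) := ⨅ i, LinearMap.ker (L i)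
  have hdisj : Disjoint (spectraplex n) N := Set.disjoint_left.mpr fun X ⟨hX, hXtr⟩ hXN => by
    have := h X hX fun i => (Submodule.mem_iInf _).mp hXN i
    simp [this] at hXtr
  have : LocallyConvexSpace ℝ (Matrix n n ℝ) := inferInstanceAs (LocallyConvexSpace ℝ (n → n → ℝ))
  obtain ⟨f, u, v, hfK, huv, hfN⟩ := geometric_hahn_banach_compact_closed convex_spectraplex
    isCompact_spectraplex N.convex N.closed_of_finiteDimensional hdisj
  have hv : v < 0 := by simpa using hfN 0 N.zero_mem
  have hker : N ≤ LinearMap.ker f.toLinearMap := fun X hX =>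
    LinearMap.eq_zero_of_forall_lt_apply (f := f.toLinearMap) hfN hX
  obtain ⟨c, hc⟩ := (Submodule.mem_span_range_iff_exists_fun ℝ).mp
    (mem_span_of_iInf_ker_le_ker hker)
  refine ⟨-c, fun X hX => ?_⟩
  have hf : f X = ∑ i, c i * (S i * X).trace := by
    rw [← f.coe_coe, ← hc]
    simp [L]
  simp only [Pi.neg_apply, neg_smul, Finset.sum_neg_distrib, neg_mul, trace_neg, Finset.sum_mul,
    smul_mul_assoc, trace_sum, trace_smul, smul_eq_mul]
  linarith [hfK X hX]

theorem exists_posDef_sum_smul {S : ι → Matrix n n ℝ} (hS : ∀ i, (S i).IsSymm)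
    (h : ∀ X : Matrix n n ℝ, X.PosSemidef → (∀ i, (S i * X).trace = 0) → X = 0) :
    ∃ y : ι → ℝ, (∑ i, y i • S i).PosDef := by
  obtain ⟨y, hy⟩ := exists_forall_spectraplex_trace_sum_smul_mul_pos S h
  refine ⟨y, posDef_of_forall_spectraplex_trace_mul_pos ?_ hy⟩
  exact isSelfAdjoint_sum _ fun i _ => isHermitian_iff_isSymm.mpr ((hS i).smul (y i))

end Matrix

theorem stmt4 {n m : ℕ} (S : Fin m → Matrix (Fin n) (Fin n) ℝ)
    (hS : ∀ i, (S i).IsSymm) :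
    ({X : Matrix (Fin n) (Fin n) ℝ | (∀ i, (S i * X).trace = 0) ∧ X.PosSemidef} = {0}) ↔
      ∃ y : Fin m → ℝ, (∑ i, y i • S i).PosDef := by
  refine ⟨fun h => exists_posDef_sum_smul hS fun X hX hXS => h.subset ⟨hXS, hX⟩, ?_⟩
  rintro ⟨y, hy⟩
  refine Set.eq_singleton_iff_unique_mem.mpr ⟨⟨by simp, .zero⟩, fun X ⟨hXS, hX⟩ => ?_⟩
  refine (hy.trace_mul_eq_zero_iff hX).mp ?_
  simp [Finset.sum_mul, trace_sum, hXS]
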